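/- Let q be an odd prime power and G₀ = 𝔽_q² ⋊ SO₂(𝔽_q). For every h ∈ SO₂(𝔽_q) with h ≠ 1, the conjugacy class of (0,h) in G₀ is {(y,h) : y ∈ 𝔽_q²} and has exactly q² elements. Consequently, G₀ has exactly 2q conjugacy classes. -/

import Mathlib

open Matrix

/-- The special orthogonal group `SO₂` over a field `F`, i.e. the rotation matrices
`!![a, -b; b, a]` with `a² + b² = 1`, as a subgroup of the units of `2×2` matrices. -/
def SO2 (F : Type) [Field F] : Subgroup (Matrix (Fin 2) (Fin 2) F)ˣ where
  carrier := {h | ∃ a b : F, a ^ 2 + b ^ 2 = 1 ∧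
    (h : Matrix (Fin 2) (Fin 2) F) = !![a, -b; b, a]}
  one_mem' := ⟨1, 0, by ring, by simp [Matrix.one_fin_two]⟩
  mul_mem' := by
    rintro x y ⟨a, b, hab, hx⟩ ⟨c, d, hcd, hy⟩
    refine ⟨a * c - b * d, a * d + b * c, ?_, ?_⟩
    · have h : (a * c - b * d) ^ 2 + (a * d + b * c) ^ 2
        = (a ^ 2 + b ^ 2) * (c ^ 2 + d ^ 2) := by ring
      rw [h, hab, hcd, one_mul]
    · rw [Units.val_mul, hx, hy, Matrix.mul_fin_two]
      congr 1 <;> ring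
  inv_mem' := by
    rintro x ⟨a, b, hab, hx⟩
    refine ⟨a, -b, by rw [neg_sq]; exact hab, ?_⟩
    have hmul : (x : Matrix (Fin 2) (Fin 2) F) * !![a, - -b; -b, a] = 1 := by
      rw [hx]
      ext i j
      fin_cases i <;> fin_cases j <;>
        simp [Matrix.mul_apply, Fin.sum_univ_two, Matrix.one_apply] <;>
        (first
          | ring1
          | linear_combination hab
          | linear_combination -hab)
    calc (↑x⁻¹ : Matrix (Fin 2) (Fin 2) F)
        = ↑x⁻¹ * ((x : Matrix (Fin 2) (Fin 2) F) * !![a, - -b; -b, a]) := by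
          rw [hmul, mul_one]
      _ = (↑x⁻¹ * (x : Matrix (Fin 2) (Fin 2) F)) * !![a, - -b; -b, a] := by
          rw [mul_assoc]
      _ = !![a, - -b; -b, a] := by rw [Units.inv_mul, one_mul]

/-- The matrix of an element of `SO₂`. -/
def SO2.mat {F : Type} [Field F] (h : SO2 F) : Matrix (Fin 2) (Fin 2) F :=
  ((h : (Matrix (Fin 2) (Fin 2) F)ˣ) : Matrix (Fin 2) (Fin 2) F)

lemma SO2.mat_inv_mul {F : Type} [Field F] (h : SO2 F) : SO2.mat h⁻¹ * SO2.mat h = 1 := by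
  simp only [SO2.mat, InvMemClass.coe_inv, Units.inv_mul]

lemma SO2.mat_mul_inv {F : Type} [Field F] (h : SO2 F) : SO2.mat h * SO2.mat h⁻¹ = 1 := by
  simp only [SO2.mat, InvMemClass.coe_inv, Units.mul_inv]

lemma SO2.mat_mul {F : Type} [Field F] (h₁ h₂ : SO2 F) :
    SO2.mat (h₁ * h₂) = SO2.mat h₁ * SO2.mat h₂ := by
  simp only [SO2.mat, MulMemClass.coe_mul, Units.val_mul]

lemma SO2.mat_one {F : Type} [Field F] : SO2.mat (1 : SO2 F) = 1 := by
  simp only [SO2.mat, OneMemClass.coe_one, Units.val_one]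

/-- The action of `SO₂(F)` on `F²` by matrix-vector multiplication, as a homomorphism
into the automorphisms of the (multiplicative version of the) additive group `F²`. -/
def rotHom (F : Type) [Field F] : SO2 F →* MulAut (Multiplicative (Fin 2 → F)) where
  toFun h :=
    { toFun := fun v => Multiplicative.ofAdd ((SO2.mat h).mulVec v.toAdd)
      invFun := fun v => Multiplicative.ofAdd ((SO2.mat h⁻¹).mulVec v.toAdd)
      left_inv := fun v => by
        simp only [toAdd_ofAdd, Matrix.mulVec_mulVec, SO2.mat_inv_mul,
          Matrix.one_mulVec, ofAdd_toAdd]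
      right_inv := fun v => by
        simp only [toAdd_ofAdd, Matrix.mulVec_mulVec, SO2.mat_mul_inv,
          Matrix.one_mulVec, ofAdd_toAdd]
      map_mul' := fun u v => by
        simp only [toAdd_mul, Matrix.mulVec_add, ofAdd_add] }
  map_one' := by
    ext v
    simp [SO2.mat_one, Matrix.one_mulVec]
  map_mul' h₁ h₂ := by
    ext v
    simp only [MulEquiv.coe_mk, Equiv.coe_fn_mk, MulAut.mul_apply, toAdd_ofAdd,
      Matrix.mulVec_mulVec, SO2.mat_mul]

/-- The group `G₀ = F² ⋊ SO₂(F)` of rigid motions of the plane `F²`. -/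
abbrev G0 (F : Type) [Field F] : Type :=
  Multiplicative (Fin 2 → F) ⋊[rotHom F] SO2 F

instance {N H : Type*} [Group N] [Group H] {φ : H →* MulAut N} [Finite N] [Finite H] :
    Finite (N ⋊[φ] H) :=
  Finite.of_injective (fun g => (g.left, g.right))
    (by rintro ⟨a, b⟩ ⟨c, d⟩ h
        simp only [Prod.mk.injEq] at h
        simp [h.1, h.2])

section Aux
variable {F : Type} [Field F]

lemma SO2.exists_mat (h : SO2 F) :
    ∃ a b : F, a ^ 2 + b ^ 2 = 1 ∧ SO2.mat h = !![a, -b; b, a] := h.2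

lemma SO2.mat_comm (h₁ h₂ : SO2 F) : SO2.mat h₁ * SO2.mat h₂ = SO2.mat h₂ * SO2.mat h₁ := by
  obtain ⟨a, b, hab, hA⟩ := SO2.exists_mat h₁
  obtain ⟨c, d, hcd, hB⟩ := SO2.exists_mat h₂
  rw [hA, hB, Matrix.mul_fin_two, Matrix.mul_fin_two]
  congr 1 <;> ring

lemma SO2.mul_comm (h₁ h₂ : SO2 F) : h₁ * h₂ = h₂ * h₁ := by
  apply Subtype.ext
  apply Units.ext
  show SO2.mat (h₁ * h₂) = SO2.mat (h₂ * h₁)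
  rw [SO2.mat_mul, SO2.mat_mul, SO2.mat_comm]

lemma SO2.eq_one_of_mat_eq_one (h : SO2 F) (hm : SO2.mat h = 1) : h = 1 := by
  apply Subtype.ext
  apply Units.ext
  exact hm

/-- If `h ≠ 1` and the characteristic is not 2, then `1 - mat h` is invertible. -/
lemma SO2.isUnit_one_sub_mat (h2 : (2 : F) ≠ 0) (h : SO2 F) (hh : h ≠ 1) :
    IsUnit (1 - SO2.mat h) := by
  obtain ⟨a, b, hab, hA⟩ := SO2.exists_mat h
  rw [Matrix.isUnit_iff_isUnit_det, isUnit_iff_ne_zero]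
  intro hdet
  rw [hA] at hdet
  have hd : (1 - a) ^ 2 + b ^ 2 = 0 := by
    rw [show (1 : Matrix (Fin 2) (Fin 2) F) = !![1,0;0,1] by rw [Matrix.one_fin_two]] at hdet
    simp [Matrix.det_fin_two] at hdet
    linear_combination hdet
  have ha : a = 1 := by
    have : 2 * (1 - a) = 0 := by linear_combination hd - hab
    rcases mul_eq_zero.mp this with h' | h'
    · exact absurd h' h2
    · exact (sub_eq_zero.mp h').symm
  have hb : b = 0 := by
    have : b ^ 2 = 0 := by rw [ha] at hab; linear_combination hab
    exact pow_eq_zero_iff (n := 2) (by norm_num) |>.mp this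
  apply hh
  apply SO2.eq_one_of_mat_eq_one
  rw [hA, ha, hb, Matrix.one_fin_two]
  norm_num

end Aux
section Aux2
variable {F : Type} [Field F]

lemma rotHom_apply (h : SO2 F) (v : Multiplicative (Fin 2 → F)) :
    rotHom F h v = Multiplicative.ofAdd ((SO2.mat h).mulVec v.toAdd) := rfl

lemma conj_class_eq (h2 : (2 : F) ≠ 0) (h : SO2 F) (hh : h ≠ 1) :
    {g : G0 F | IsConj (SemidirectProduct.inr h) g} =
      {g : G0 F | ∃ y : Fin 2 → F, g = ⟨Multiplicative.ofAdd y, h⟩} := by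
  ext g
  simp only [Set.mem_setOf_eq]
  constructor
  · intro hcj
    obtain ⟨c, hc⟩ := isConj_iff.mp hcj
    have hr : g.right = h := by
      have h1 := congrArg (SemidirectProduct.rightHom) hc
      simp only [_root_.map_mul, _root_.map_inv, SemidirectProduct.rightHom_inr] at h1
      rw [show g.right = SemidirectProduct.rightHom g from rfl, ← h1, SO2.mul_comm (SemidirectProduct.rightHom c) h, mul_assoc,
        mul_inv_cancel, mul_one]
    refine ⟨Multiplicative.toAdd g.left, ?_⟩
    cases g
    simp only [SemidirectProduct.ext_iff] at hr ⊢
    exact ⟨rfl, hr⟩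
  · rintro ⟨y, rfl⟩
    have hu := SO2.isUnit_one_sub_mat h2 h hh
    set A : Matrix (Fin 2) (Fin 2) F := 1 - SO2.mat h with hA
    have key : A *ᵥ (A⁻¹ *ᵥ y) = y := by
      rw [Matrix.mulVec_mulVec,
        Matrix.mul_nonsing_inv _ ((Matrix.isUnit_iff_isUnit_det A).mp hu), Matrix.one_mulVec]
    set z : Fin 2 → F := A⁻¹ *ᵥ y with hz
    refine isConj_iff.mpr ⟨SemidirectProduct.inl (Multiplicative.ofAdd z), ?_⟩
    have hleft : (SemidirectProduct.inl (φ := rotHom F) (Multiplicative.ofAdd z) *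
        SemidirectProduct.inr h *
        (SemidirectProduct.inl (Multiplicative.ofAdd z))⁻¹).left = Multiplicative.ofAdd y := by
      simp only [SemidirectProduct.mul_left, SemidirectProduct.mul_right,
        SemidirectProduct.left_inl, SemidirectProduct.right_inl, SemidirectProduct.left_inr,
        SemidirectProduct.right_inr, SemidirectProduct.inv_left, SemidirectProduct.inv_right,
        _root_.map_one, one_mul, mul_one, inv_one, _root_.map_inv, rotHom_apply,
        SO2.mat_one, Matrix.one_mulVec, toAdd_one, Matrix.mulVec_zero]
      apply Multiplicative.toAdd.injective
      simp only [toAdd_mul, toAdd_ofAdd, toAdd_inv, Matrix.mulVec_neg]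
      rw [← key]
      rw [hA, Matrix.sub_mulVec, Matrix.one_mulVec]
      abel
    have hright : (SemidirectProduct.inl (φ := rotHom F) (Multiplicative.ofAdd z) *
        SemidirectProduct.inr h *
        (SemidirectProduct.inl (Multiplicative.ofAdd z))⁻¹).right = h := by
      simp [SemidirectProduct.mul_right]
    ext
    · rw [hleft]
    · rw [hright]

end Aux2
section Aux3
variable {F : Type} [Field F]

/-- The conjugacy class of a rotation, as a type, is equivalent to `F²`. -/
def classEquiv (h : SO2 F) :
    {g : G0 F | ∃ y : Fin 2 → F, g = ⟨Multiplicative.ofAdd y, h⟩} ≃ (Fin 2 → F) where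
  toFun g := Multiplicative.toAdd g.1.left
  invFun y := ⟨⟨Multiplicative.ofAdd y, h⟩, ⟨y, rfl⟩⟩
  left_inv := by rintro ⟨g, y, rfl⟩; rfl
  right_inv y := rfl

lemma card_class [Fintype F] (h : SO2 F) :
    Nat.card {g : G0 F | ∃ y : Fin 2 → F, g = ⟨Multiplicative.ofAdd y, h⟩}
      = Fintype.card F ^ 2 := by
  rw [Nat.card_congr (classEquiv h), Nat.card_eq_fintype_card]
  simp

/-- `SO₂(F)` is in bijection with the unit circle in `F²`. -/
lemma card_SO2_eq_card_sphere [Fintype F] :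
    Nat.card (SO2 F) = Nat.card {p : F × F // p.1 ^ 2 + p.2 ^ 2 = 1} := by
  apply Nat.card_eq_of_bijective
    (f := fun h => ⟨(SO2.mat h 0 0, SO2.mat h 1 0), by
      obtain ⟨a, b, hab, hA⟩ := SO2.exists_mat h
      rw [hA]; simpa using hab⟩)
  constructor
  · intro h₁ h₂ hEq
    obtain ⟨a, b, hab, hA⟩ := SO2.exists_mat h₁
    obtain ⟨c, d, hcd, hB⟩ := SO2.exists_mat h₂
    simp only [Subtype.mk.injEq, Prod.mk.injEq, hA, hB] at hEq
    norm_num [Matrix.cons_val_zero, Matrix.cons_val_one] at hEq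
    apply Subtype.ext; apply Units.ext
    show SO2.mat h₁ = SO2.mat h₂
    rw [hA, hB, hEq.1, hEq.2]
  · rintro ⟨⟨a, b⟩, hab⟩
    simp only [Subtype.mk.injEq, Prod.mk.injEq]
    have hab' : a ^ 2 + b ^ 2 = 1 := hab
    have hmul1 : !![a, -b; b, a] * !![a, b; -b, a] = 1 := by
      ext i j
      fin_cases i <;> fin_cases j <;>
        simp [Matrix.mul_apply, Fin.sum_univ_two, Matrix.one_apply] <;>
        first
          | ring1
          | linear_combination hab'
          | linear_combination -hab'
    have hmul2 : !![a, b; -b, a] * !![a, -b; b, a] = 1 := by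
      ext i j
      fin_cases i <;> fin_cases j <;>
        simp [Matrix.mul_apply, Fin.sum_univ_two, Matrix.one_apply] <;>
        first
          | ring1
          | linear_combination hab'
          | linear_combination -hab'
    refine ⟨⟨⟨!![a, -b; b, a], !![a, b; -b, a], hmul1, hmul2⟩, ⟨a, b, hab', rfl⟩⟩, ?_⟩
    constructor <;> simp [SO2.mat]

end Aux3
section Aux4
variable {F : Type} [Field F] [Fintype F] [DecidableEq F]

lemma quadChar_inv_self (hF : ringChar F ≠ 2) :
    (quadraticChar F)⁻¹ = quadraticChar F := by
  have hsq : quadraticChar F * quadraticChar F = 1 := by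
    apply MulChar.ext
    intro a
    rw [MulChar.mul_apply, MulChar.one_apply_coe, ← sq]
    exact quadraticChar_sq_one a.ne_zero
  exact inv_eq_of_mul_eq_one_right hsq

open Finset in
lemma sum_quadChar_one_sub_sq (hF : ringChar F ≠ 2) :
    ∑ a : F, (quadraticChar F (1 - a ^ 2) : ℤ) = -(quadraticChar F (-1)) := by
  have h2 : (2 : F) ≠ 0 := Ring.two_ne_zero hF
  have hmul : (quadraticChar F 2 : ℤ) * quadraticChar F 2 = 1 := by
    rw [← sq]; exact quadraticChar_sq_one h2
  let e : F ≃ F :=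
    ⟨fun x => 2 * x - 1, fun y => (y + 1) / 2,
      fun x => by field_simp; ring, fun y => by field_simp; ring⟩
  have hcomp := Equiv.sum_comp e (fun a : F => (quadraticChar F (1 - a ^ 2) : ℤ))
  rw [← hcomp]
  have hpt : ∀ x : F, (quadraticChar F (1 - (e x) ^ 2) : ℤ)
      = (quadraticChar F 2 * quadraticChar F 2) *
        (quadraticChar F x * quadraticChar F (1 - x)) := by
    intro x
    have : (1 : F) - (e x) ^ 2 = (2 * x) * (2 * (1 - x)) := by
      show (1 : F) - (2 * x - 1) ^ 2 = _
      ring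
    rw [this, _root_.map_mul, _root_.map_mul, _root_.map_mul]
    ring
  rw [Finset.sum_congr rfl fun x _ => hpt x, ← Finset.mul_sum, hmul, one_mul]
  have : ∑ x : F, (quadraticChar F x : ℤ) * quadraticChar F (1 - x)
      = jacobiSum (quadraticChar F) (quadraticChar F) := rfl
  rw [this]
  have hji := jacobiSum_nontrivial_inv (χ := quadraticChar F) (R := ℤ) (quadraticChar_ne_one hF)
  rw [quadChar_inv_self hF] at hji
  exact hji

end Aux4
section Aux5
variable {F : Type} [Field F] [Fintype F] [DecidableEq F]

open Finset in
lemma int_card_sphere (hF : ringChar F ≠ 2) :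
    (Nat.card {p : F × F // p.1 ^ 2 + p.2 ^ 2 = 1} : ℤ)
      = Fintype.card F - quadraticChar F (-1) := by
  have e : {p : F × F // p.1 ^ 2 + p.2 ^ 2 = 1} ≃ Σ a : F, {b : F // b ^ 2 = 1 - a ^ 2} :=
    ⟨fun p => ⟨p.1.1, ⟨p.1.2, by linear_combination p.2⟩⟩,
     fun x => ⟨(x.1, x.2.1), by linear_combination x.2.2⟩,
     fun p => rfl, fun x => rfl⟩
  rw [Nat.card_congr e, Nat.card_eq_fintype_card, Fintype.card_sigma]
  have hfib : ∀ a : F, (Fintype.card {b : F // b ^ 2 = 1 - a ^ 2} : ℤ)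
      = quadraticChar F (1 - a ^ 2) + 1 := by
    intro a
    have hq := quadraticChar_card_sqrts hF (1 - a ^ 2)
    rw [Set.toFinset_card] at hq
    rw [← hq]
    norm_cast
  push_cast
  rw [Finset.sum_congr rfl fun a _ => hfib a, Finset.sum_add_distrib,
    sum_quadChar_one_sub_sq hF, Finset.sum_const, Finset.card_univ]
  push_cast
  try ring

lemma card_SO2_identity (hodd : Odd (Fintype.card F)) :
    Nat.card (SO2 F) ^ 2 + Fintype.card F ^ 2
      = 2 * Fintype.card F * Nat.card (SO2 F) + 1 := by
  have hF : ringChar F ≠ 2 := by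
    intro hc
    have h0 := FiniteField.even_card_of_char_two (F := F) hc
    have h1 := Nat.odd_iff.mp hodd
    omega
  have h1 : (Nat.card (SO2 F) : ℤ) = Fintype.card F - quadraticChar F (-1) := by
    rw [card_SO2_eq_card_sphere]
    exact int_card_sphere hF
  have hchi : (quadraticChar F (-1) : ℤ) ^ 2 = 1 :=
    quadraticChar_sq_one (neg_ne_zero.mpr one_ne_zero)
  have hz : (Nat.card (SO2 F) : ℤ) ^ 2 + (Fintype.card F : ℤ) ^ 2
      = 2 * Fintype.card F * Nat.card (SO2 F) + 1 := by
    linear_combination ((Nat.card (SO2 F) : ℤ) - Fintype.card F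
      - quadraticChar F (-1)) * h1 + hchi
  exact_mod_cast hz

end Aux5
section Aux6
variable {F : Type} [Field F]

/-- The set of pairs of translation parts making two group elements with given
rotation parts commute. -/
def commFiber (F : Type) [Field F] (k : SO2 F × SO2 F) : Type :=
  {v : (Fin 2 → F) × (Fin 2 → F) //
    v.1 + SO2.mat k.1 *ᵥ v.2 = v.2 + SO2.mat k.2 *ᵥ v.1}

/-- Commuting pairs in `G0 F` decompose as a sigma type over pairs of rotations. -/
def commEquiv : {p : G0 F × G0 F // Commute p.1 p.2} ≃ Σ k : SO2 F × SO2 F, commFiber F k where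
  toFun p := ⟨(p.1.1.right, p.1.2.right),
    ⟨(Multiplicative.toAdd p.1.1.left, Multiplicative.toAdd p.1.2.left), by
      have hl := congrArg SemidirectProduct.left p.2.eq
      simp only [SemidirectProduct.mul_left, rotHom_apply] at hl
      have := congrArg Multiplicative.toAdd hl
      simpa using this⟩⟩
  invFun s := ⟨(⟨Multiplicative.ofAdd s.2.1.1, s.1.1⟩, ⟨Multiplicative.ofAdd s.2.1.2, s.1.2⟩), by
    show _ * _ = _ * _
    refine SemidirectProduct.ext ?_ ?_
    · show Multiplicative.ofAdd s.2.1.1 * rotHom F s.1.1 (Multiplicative.ofAdd s.2.1.2)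
        = Multiplicative.ofAdd s.2.1.2 * rotHom F s.1.2 (Multiplicative.ofAdd s.2.1.1)
      rw [rotHom_apply, rotHom_apply]
      apply Multiplicative.toAdd.injective
      simpa using s.2.2
    · show s.1.1 * s.1.2 = s.1.2 * s.1.1
      exact SO2.mul_comm _ _⟩
  left_inv p := rfl
  right_inv s := rfl

lemma fiber_cond_iff (k : SO2 F × SO2 F) (v : (Fin 2 → F) × (Fin 2 → F)) :
    (v.1 + SO2.mat k.1 *ᵥ v.2 = v.2 + SO2.mat k.2 *ᵥ v.1) ↔
      (1 - SO2.mat k.2) *ᵥ v.1 = (1 - SO2.mat k.1) *ᵥ v.2 := by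
  rw [Matrix.sub_mulVec, Matrix.sub_mulVec, Matrix.one_mulVec, Matrix.one_mulVec,
    sub_eq_sub_iff_add_eq_add]

/-- Swapping the two factors gives an equivalence of fibers. -/
def commFiberSwap (k : SO2 F × SO2 F) : commFiber F k ≃ commFiber F (k.2, k.1) where
  toFun v := ⟨(v.1.2, v.1.1), v.2.symm⟩
  invFun v := ⟨(v.1.2, v.1.1), v.2.symm⟩
  left_inv v := rfl
  right_inv v := rfl

/-- If the second rotation is nontrivial, the fiber is parametrized by the second vector. -/
noncomputable def commFiberEquiv (h2 : (2 : F) ≠ 0) (k : SO2 F × SO2 F) (hk : k.2 ≠ 1) :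
    commFiber F k ≃ (Fin 2 → F) where
  toFun v := v.1.2
  invFun z := ⟨((1 - SO2.mat k.2)⁻¹ *ᵥ ((1 - SO2.mat k.1) *ᵥ z), z), by
    rw [fiber_cond_iff]
    show (1 - SO2.mat k.2) *ᵥ ((1 - SO2.mat k.2)⁻¹ *ᵥ _) = _
    rw [Matrix.mulVec_mulVec, Matrix.mul_nonsing_inv _
      ((Matrix.isUnit_iff_isUnit_det _).mp (SO2.isUnit_one_sub_mat h2 k.2 hk)),
      Matrix.one_mulVec]⟩
  left_inv := by
    rintro ⟨⟨v₁, v₂⟩, hc⟩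
    rw [fiber_cond_iff] at hc
    apply Subtype.ext
    simp only
    rw [Prod.ext_iff]
    refine ⟨?_, rfl⟩
    show (1 - SO2.mat k.2)⁻¹ *ᵥ ((1 - SO2.mat k.1) *ᵥ v₂) = v₁
    rw [← hc, Matrix.mulVec_mulVec, Matrix.nonsing_inv_mul _
      ((Matrix.isUnit_iff_isUnit_det _).mp (SO2.isUnit_one_sub_mat h2 k.2 hk)),
      Matrix.one_mulVec]
  right_inv z := rfl

lemma card_commFiber_ne (h2 : (2 : F) ≠ 0) [Fintype F] (k : SO2 F × SO2 F) (hk : k ≠ (1, 1)) :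
    Nat.card (commFiber F k) = Fintype.card F ^ 2 := by
  have hcard : Nat.card (Fin 2 → F) = Fintype.card F ^ 2 := by
    rw [Nat.card_eq_fintype_card]; simp
  by_cases hk2 : k.2 = 1
  · have hk1 : k.1 ≠ 1 := by
      intro hk1; exact hk (Prod.ext hk1 hk2)
    rw [Nat.card_congr ((commFiberSwap k).trans (commFiberEquiv h2 (k.2, k.1) hk1))]
    exact hcard
  · rw [Nat.card_congr (commFiberEquiv h2 k hk2)]
    exact hcard

/-- The fiber over `(1,1)` is all of `F² × F²`. -/
def commFiberOneEquiv : commFiber F (1, 1) ≃ (Fin 2 → F) × (Fin 2 → F) where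
  toFun v := v.1
  invFun v := ⟨v, by simp [SO2.mat_one, Matrix.one_mulVec, add_comm]⟩
  left_inv v := rfl
  right_inv v := rfl

lemma card_commFiber_one [Fintype F] :
    Nat.card (commFiber F (1, 1)) = Fintype.card F ^ 4 := by
  rw [Nat.card_congr commFiberOneEquiv, Nat.card_eq_fintype_card]
  simp
  ring

end Aux6
section Aux7
variable {F : Type} [Field F]

lemma ringChar_ne_two_of_odd [Fintype F] (hodd : Odd (Fintype.card F)) :
    ringChar F ≠ 2 := by
  intro hc
  have h0 := FiniteField.even_card_of_char_two (F := F) hc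
  have h1 := Nat.odd_iff.mp hodd
  omega

lemma card_G0 [Fintype F] : Nat.card (G0 F) = Fintype.card F ^ 2 * Nat.card (SO2 F) := by
  have e : G0 F ≃ Multiplicative (Fin 2 → F) × SO2 F :=
    ⟨fun g => (g.left, g.right), fun p => ⟨p.1, p.2⟩, fun g => rfl, fun p => rfl⟩
  rw [Nat.card_congr e, Nat.card_prod]
  congr 1
  rw [Nat.card_congr Multiplicative.toAdd, Nat.card_eq_fintype_card]
  simp

instance commFiberFinite [Fintype F] (k : SO2 F × SO2 F) : Finite (commFiber F k) :=
  Subtype.finite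

lemma card_comm_pairs [Fintype F] (hodd : Odd (Fintype.card F)) :
    Nat.card {p : G0 F × G0 F // Commute p.1 p.2}
      = 2 * Fintype.card F * Nat.card (G0 F) := by
  classical
  letI : Fintype (SO2 F) := Fintype.ofFinite _
  letI : ∀ k : SO2 F × SO2 F, Fintype (commFiber F k) := fun k => Fintype.ofFinite _
  have h2 : (2 : F) ≠ 0 := Ring.two_ne_zero (ringChar_ne_two_of_odd hodd)
  set q := Fintype.card F with hq
  set m := Nat.card (SO2 F) with hm
  have hm1 : 1 ≤ m := Nat.card_pos
  have hsig : Nat.card {p : G0 F × G0 F // Commute p.1 p.2}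
      = ∑ k : SO2 F × SO2 F, Nat.card (commFiber F k) := by
    rw [Nat.card_congr commEquiv, Nat.card_eq_fintype_card, Fintype.card_sigma]
    exact Finset.sum_congr rfl fun k _ => Nat.card_eq_fintype_card.symm
  have hsplit : ∑ k : SO2 F × SO2 F, Nat.card (commFiber F k)
      = q ^ 4 + (m ^ 2 - 1) * q ^ 2 := by
    rw [← Finset.add_sum_erase Finset.univ _ (Finset.mem_univ ((1, 1) : SO2 F × SO2 F)),
      card_commFiber_one]
    congr 1
    rw [Finset.sum_congr rfl fun k hk =>
        card_commFiber_ne h2 k (Finset.mem_erase.mp hk).1,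
      Finset.sum_const, Finset.card_erase_of_mem (Finset.mem_univ _), Finset.card_univ]
    have hc : Fintype.card (SO2 F × SO2 F) = m ^ 2 := by
      rw [Fintype.card_prod, sq, hm, Nat.card_eq_fintype_card]
    rw [hc, smul_eq_mul]
  have hid : m ^ 2 + q ^ 2 = 2 * q * m + 1 := card_SO2_identity hodd
  rw [hsig, hsplit, card_G0, ← hq, ← hm]
  have hb1 : 1 ≤ m ^ 2 := Nat.one_le_pow _ _ hm1
  have hidz : (m : ℤ) ^ 2 + (q : ℤ) ^ 2 = 2 * q * m + 1 := by exact_mod_cast hid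
  zify [hb1]
  linear_combination (q : ℤ) ^ 2 * hidz

end Aux7
section Aux8
variable {F : Type} [Field F]

lemma card_conjClasses_G0 [Fintype F] (hodd : Odd (Fintype.card F)) :
    Nat.card (ConjClasses (G0 F)) = 2 * Fintype.card F := by
  have hcomm := card_comm_eq_card_conjClasses_mul_card (G0 F)
  rw [card_comm_pairs hodd] at hcomm
  have hG : 0 < Nat.card (G0 F) := Nat.card_pos
  exact (Nat.eq_of_mul_eq_mul_right hG hcomm.symm)

end Aux8

/-- **Conjugacy classes of rotations.** For every `h ∈ SO₂(𝔽_q)` with `h ≠ 1`, the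
conjugacy class of `(0, h)` in `G₀ = 𝔽_q² ⋊ SO₂(𝔽_q)` is `{(y, h) : y ∈ 𝔽_q²}` and has
exactly `q²` elements. Consequently, `G₀` has exactly `2q` conjugacy classes. -/
theorem conj_class_rotation_G0 (F : Type) [Field F] [Fintype F] (q : ℕ)
    (hq : q = Fintype.card F) (hodd : Odd q) (h : SO2 F) (hh : h ≠ 1) :
    {g : G0 F | IsConj (SemidirectProduct.inr h) g} =
      {g : G0 F | ∃ y : Fin 2 → F, g = ⟨Multiplicative.ofAdd y, h⟩} ∧
    Nat.card {g : G0 F | IsConj (SemidirectProduct.inr h) g} = q ^ 2 ∧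
    Nat.card (ConjClasses (G0 F)) = 2 * q := by
  subst hq
  have h2 : (2 : F) ≠ 0 := Ring.two_ne_zero (ringChar_ne_two_of_odd hodd)
  have hset := conj_class_eq h2 h hh
  refine ⟨hset, ?_, card_conjClasses_G0 hodd⟩
  rw [hset]
  exact card_class h
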